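/- arXiv:2510.15932 — 4 statements merged into one kernel-verified Lean document; each statement's English description precedes it below -/
import Mathlib

section
/- Let F be a field of characteristic zero and let A, B ∈ Mₙ(F) be balanced matrices, i.e., A is similar to −A and B is similar to −B. Then 𝒞𝓛(A) = 𝒞𝓛(B) if and only if A and B are odd polynomially equivalent. -/
/-- The clifforder of a matrix `A`: all matrices anti-commuting with `A`. -/
def clifforder {n : ℕ} {F : Type*} [Field F] (A : Matrix (Fin n) (Fin n) F) :
    Set (Matrix (Fin n) (Fin n) F) :=
  {X | A * X = -(X * A)}

/-- `A` and `B` are odd polynomially equivalent: each is an odd polynomial in the other. -/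
def OddPolyEquiv {n : ℕ} {F : Type*} [Field F] (A B : Matrix (Fin n) (Fin n) F) : Prop :=
  ∃ f g : Polynomial F,
    (∀ i ∈ f.support, Odd i) ∧ (∀ i ∈ g.support, Odd i) ∧
    B = Polynomial.aeval A f ∧ A = Polynomial.aeval B g

/-- `A` is balanced: `A` is similar to `-A`. -/
def IsBalanced {n : ℕ} {F : Type*} [Field F] (A : Matrix (Fin n) (Fin n) F) : Prop :=
  ∃ P : Matrix (Fin n) (Fin n) F, IsUnit P ∧ -A = P⁻¹ * A * P

/-!
If `P` is invertible and anticommutes with `A`, then `C ↦ P * C` maps the centralizer of `A`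
onto `clifforder A`. So if `A` is balanced and `clifforder A = clifforder B`, such a `P` also
anticommutes with `B`, and `A`, `B` have the same centralizer. By the double centralizer theorem
for a single matrix, `B = p(A)` for a polynomial `p`; conjugating by `P` gives `p(-A) = -p(A)`,
so the odd part `(p(X) - p(-X)) / 2` of `p` also gives `B`. Conversely, an odd polynomial in `A`
anticommutes with everything that anticommutes with `A`.

For the double centralizer theorem, view `Vⁿ` as a `K[X]`-module through `f`. A basis, seen as an
element of `Vⁿ`, generates a copy of `K[X] ⧸ (minpoly f)`, which is self-injective, so there is a
`K[X]`-linear retraction onto it. Such a retraction commutes with every `g` that commutes with all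
endomorphisms commuting with `f`, applied coordinatewise; hence the tuple `(g bᵢ)ᵢ` lies in the
`K[X]`-span of `(bᵢ)ᵢ`, i.e. `g = p(f)`.
-/

open Polynomial

section SelfInjective

variable {R : Type*} [CommRing R] [IsPrincipalIdealRing R] {f : R}

theorem Ideal.exists_dvd_and_eq_span_mk (J : Ideal (R ⧸ span {f})) :
    ∃ g, g ∣ f ∧ J = span {Quotient.mk _ g} := by
  obtain ⟨g, hg⟩ := Submodule.IsPrincipal.principal (J.comap (Quotient.mk (span {f})))
  refine ⟨g, ?_, ?_⟩
  · rw [← mem_span_singleton, ← submodule_span_eq, ← hg, mem_comap,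
      (Quotient.eq_zero_iff_dvd f f).2 dvd_rfl]
    exact J.zero_mem
  · rw [← map_comap_of_surjective _ Quotient.mk_surjective J, hg, submodule_span_eq, map_span,
      Set.image_singleton]

variable [IsDomain R]

theorem Module.Baer.quotient_span_singleton (hf : f ≠ 0) :
    Module.Baer (R ⧸ Ideal.span {f}) (R ⧸ Ideal.span {f}) := by
  intro J φ
  obtain ⟨g, ⟨k, rfl⟩, rfl⟩ := Ideal.exists_dvd_and_eq_span_mk J
  let mk := Ideal.Quotient.mk (Ideal.span {g * k})
  let s : Ideal.span {mk g} := ⟨_, Ideal.mem_span_singleton_self _⟩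
  obtain ⟨h, hh⟩ := Ideal.Quotient.mk_surjective (φ s)
  obtain ⟨m, rfl⟩ : g ∣ h := by
    have hks : mk k • s = 0 := by
      ext
      simp [s, mk, ← map_mul, mul_comm k]
    have := congrArg φ hks
    rw [map_smul, ← hh, map_zero, smul_eq_mul, ← map_mul, Ideal.Quotient.eq_zero_iff_dvd,
      mul_comm k] at this
    exact (mul_dvd_mul_iff_right (right_ne_zero_of_mul hf)).1 this
  refine ⟨LinearMap.toSpanSingleton _ _ (mk m), fun x hx => ?_⟩
  obtain ⟨c, rfl⟩ := Ideal.mem_span_singleton'.1 hx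
  have : (⟨c * mk g, hx⟩ : Ideal.span {mk g}) = c • s := rfl
  rw [this, map_smul, ← hh]
  simp [mk, mul_assoc]

theorem Module.IsTorsionBy.exists_retraction_span_singleton {M : Type*} [AddCommGroup M]
    [Module R M] (hM : Module.IsTorsionBy R M f) (hf : f ≠ 0) {w : M}
    (hw : ∀ r : R, r • w = 0 → f ∣ r) :
    ∃ π : M →ₗ[R] M, π w = w ∧ ∀ x, π x ∈ R ∙ w := by
  let _ := hM.module
  let ι := LinearMap.toSpanSingleton (R ⧸ Ideal.span {f}) M w
  have hι : Function.Injective ι := by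
    refine (injective_iff_map_eq_zero ι).2 fun s hs => ?_
    obtain ⟨r, rfl⟩ := Ideal.Quotient.mk_surjective s
    exact (Ideal.Quotient.eq_zero_iff_dvd f r).2 (hw r hs)
  obtain ⟨ρ, hρ⟩ := (Module.Baer.quotient_span_singleton hf).extension_property ι hι LinearMap.id
  refine ⟨(ι ∘ₗ ρ).restrictScalars R, ?_, fun x => ?_⟩
  · simpa [ι] using congrArg ι (LinearMap.congr_fun hρ 1)
  · obtain ⟨r, hr⟩ := Ideal.Quotient.mk_surjective (ρ x)
    exact Submodule.mem_span_singleton.2 ⟨r, by simp [ι, ← hr]⟩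

end SelfInjective

theorem LinearMap.apply_comp_of_forall_commute {R M ι : Type*} [Semiring R] [AddCommMonoid M]
    [Module R M] [Fintype ι] [DecidableEq ι] (Φ : (ι → M) →ₗ[R] ι → M) {T : M →+ M}
    (hT : ∀ (C : M →ₗ[R] M) (x : M), C (T x) = T (C x)) (x : ι → M) :
    Φ (T ∘ x) = T ∘ Φ x := by
  have hΦ (y : ι → M) (i : ι) : Φ y i = ∑ j, (proj i ∘ₗ Φ ∘ₗ single R (fun _ ↦ M) j) (y j) := by
    conv_lhs => rw [← Finset.univ_sum_single y]
    simp
  ext i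
  simp only [Function.comp_apply, hΦ, map_sum, hT]

theorem Module.AEval'.commute_conj_of_forall_commute {R M : Type*} [CommSemiring R]
    [AddCommMonoid M] [Module R M] {f g : Module.End R M}
    (h : ∀ c : Module.End R M, Commute f c → Commute g c) (C : AEval' f →ₗ[R[X]] AEval' f) :
    Commute (C.restrictScalars R) ((AEval'.of f).conj g) := by
  let c : Module.End R M := (AEval'.of f).symm.conj (C.restrictScalars R)
  have hc : Commute f c := LinearMap.ext fun v ↦ by
    simp only [c, LinearEquiv.conj_apply, Module.End.mul_apply, LinearMap.coe_comp,
      LinearEquiv.coe_coe, Function.comp_apply, LinearMap.coe_restrictScalars,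
      LinearEquiv.symm_symm]
    rw [← AEval'.X_smul_of, map_smul, AEval'.of_symm_X_smul]
  ext x
  simpa [c, LinearEquiv.conj_apply] using
    congrArg (AEval'.of f) (LinearMap.congr_fun (h c hc) ((AEval'.of f).symm x)).symm

theorem Module.End.exists_aeval_eq_of_forall_commute {K V : Type*} [Field K] [AddCommGroup V]
    [Module K V] [FiniteDimensional K V] {f g : Module.End K V}
    (h : ∀ c : Module.End K V, Commute f c → Commute g c) : ∃ p : K[X], g = aeval f p := by
  let b := Module.finBasis K V
  let e := AEval'.of f
  let w : Fin (Module.finrank K V) → AEval' f := fun i ↦ e (b i)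
  have smul_w (p : K[X]) : p • w = fun i ↦ e (aeval f p (b i)) := by
    ext i
    exact (AEval.of_aeval_smul (a := f) p (b i)).symm
  have htor : IsTorsionBy K[X] (Fin (Module.finrank K V) → AEval' f) (minpoly K f) := fun x ↦ by
    ext i
    rw [Pi.smul_apply, ← e.apply_symm_apply (x i), ← AEval.of_aeval_smul, minpoly.aeval]
    simp
  have hw (p : K[X]) (hp : p • w = 0) : minpoly K f ∣ p := by
    rw [smul_w] at hp
    exact minpoly.dvd K f (b.ext fun i ↦ by simpa using congrFun hp i)
  obtain ⟨π, hπw, hπ⟩ :=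
    htor.exists_retraction_span_singleton (minpoly.ne_zero (Algebra.IsIntegral.isIntegral f)) hw
  let G := (e.conj g).toAddMonoidHom
  have hG (C : AEval' f →ₗ[K[X]] AEval' f) (x) : C (G x) = G (C x) :=
    LinearMap.congr_fun (AEval'.commute_conj_of_forall_commute h C) x
  obtain ⟨p, hp⟩ := Submodule.mem_span_singleton.1 (hπ (G ∘ w))
  have hGw : G ∘ w = p • w := by rw [hp, π.apply_comp_of_forall_commute hG, hπw]
  rw [smul_w] at hGw
  exact ⟨p, b.ext fun i ↦ e.injective (by simpa [G, w, LinearEquiv.conj_apply] using congrFun hGw i)⟩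

theorem Matrix.exists_aeval_eq_of_forall_commute {n K : Type*} [Fintype n] [DecidableEq n]
    [Field K] {A B : Matrix n n K} (h : ∀ C : Matrix n n K, Commute A C → Commute B C) :
    ∃ p : K[X], B = aeval A p := by
  let e : Matrix n n K ≃ₐ[K] Module.End K (n → K) := Matrix.toLinAlgEquiv'
  obtain ⟨p, hp⟩ := Module.End.exists_aeval_eq_of_forall_commute (f := e A) (g := e B)
    fun c hc => by simpa using (h (e.symm c) (by simpa using hc.map e.symm)).map e
  refine ⟨p, e.injective ?_⟩
  rw [hp, aeval_algEquiv]
  rfl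

theorem SemiconjBy.aeval {R A : Type*} [CommSemiring R] [Semiring A] [Algebra R A] {x a b : A}
    (h : SemiconjBy x a b) (p : R[X]) : SemiconjBy x (aeval a p) (aeval b p) := by
  induction p using Polynomial.induction_on' with
  | add p q hp hq => simpa using hp.add_right hq
  | monomial n c =>
    simpa [aeval_monomial] using SemiconjBy.mul_right (Algebra.commutes' c x).symm (h.pow_right n)

section OddPolynomial

variable {R A : Type*} [CommRing R] [Ring A] [Algebra R A] {p : R[X]}

theorem Polynomial.coeff_comp_neg_X (p : R[X]) (n : ℕ) :
    (p.comp (-X)).coeff n = p.coeff n * (-1) ^ n := by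
  simpa using p.comp_C_mul_X_coeff (r := -1) (n := n)

theorem Polynomial.comp_neg_X_of_odd (hp : ∀ i ∈ p.support, Odd i) : p.comp (-X) = -p := by
  ext n
  rw [coeff_comp_neg_X, coeff_neg]
  by_cases hn : n ∈ p.support
  · simp [(hp n hn).neg_one_pow]
  · simp [notMem_support_iff.1 hn]

theorem Polynomial.aeval_neg_of_odd (hp : ∀ i ∈ p.support, Odd i) (a : A) :
    aeval (-a) p = -aeval a p := by
  rw [← map_neg, ← comp_neg_X_of_odd hp, aeval_comp, map_neg, aeval_X]

theorem Polynomial.exists_odd_aeval_eq [Invertible (2 : R)] {a : A}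
    (h : aeval (-a) p = -aeval a p) :
    ∃ q : R[X], (∀ i ∈ q.support, Odd i) ∧ aeval a q = aeval a p := by
  refine ⟨C ⅟2 * (p - p.comp (-X)), fun i hi => ?_, ?_⟩
  · rw [mem_support_iff, coeff_C_mul, coeff_sub, coeff_comp_neg_X] at hi
    obtain hi' | hi' := i.even_or_odd
    · simp [hi'.neg_one_pow] at hi
    · exact hi'
  · rw [map_mul, aeval_C, map_sub, aeval_comp, map_neg, aeval_X, h, sub_neg_eq_add,
      ← Algebra.smul_def, ← two_smul R, smul_smul, invOf_mul_self, one_smul]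

end OddPolynomial

section Clifforder

variable {n : ℕ} {F : Type*} [Field F] {A B P X : Matrix (Fin n) (Fin n) F}

theorem mem_clifforder_iff_semiconjBy : X ∈ clifforder A ↔ SemiconjBy X (-A) A := by
  show A * X = -(X * A) ↔ X * -A = A * X
  rw [Matrix.mul_neg]
  exact eq_comm

theorem IsBalanced.exists_isUnit_mem_clifforder (hA : IsBalanced A) :
    ∃ P, IsUnit P ∧ P ∈ clifforder A := by
  obtain ⟨P, hP, hPA⟩ := hA
  refine ⟨P, hP, mem_clifforder_iff_semiconjBy.2 ?_⟩
  rw [SemiconjBy, hPA, Matrix.mul_assoc, Matrix.mul_nonsing_inv_cancel_left _ _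
    ((Matrix.isUnit_iff_isUnit_det P).1 hP)]

theorem mul_mem_clifforder_iff (hP : IsUnit P) (hPA : P ∈ clifforder A) :
    P * X ∈ clifforder A ↔ Commute A X := by
  rw [mem_clifforder_iff_semiconjBy] at hPA ⊢
  rw [SemiconjBy, ← Matrix.mul_assoc A, ← hPA, Matrix.mul_assoc, Matrix.mul_assoc,
    hP.mul_right_inj, Commute, SemiconjBy, Matrix.mul_neg, Matrix.neg_mul, neg_inj, eq_comm]

theorem clifforder_subset_clifforder_aeval {f : F[X]} (hf : ∀ i ∈ f.support, Odd i) :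
    clifforder A ⊆ clifforder (aeval A f) := fun X hX => by
  rw [mem_clifforder_iff_semiconjBy] at hX ⊢
  simpa [aeval_neg_of_odd hf] using hX.aeval f

theorem exists_odd_aeval_eq_of_clifforder_eq [NeZero (2 : F)] (hA : IsBalanced A)
    (h : clifforder A = clifforder B) :
    ∃ f : F[X], (∀ i ∈ f.support, Odd i) ∧ B = aeval A f := by
  obtain ⟨P, hP, hPA⟩ := hA.exists_isUnit_mem_clifforder
  have hPB : P ∈ clifforder B := h ▸ hPA
  obtain ⟨p, rfl⟩ := Matrix.exists_aeval_eq_of_forall_commute fun C hC =>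
    (mul_mem_clifforder_iff hP hPB).1 (h ▸ (mul_mem_clifforder_iff hP hPA).2 hC)
  have hp : aeval (-A) p = -aeval A p := by
    have := (mem_clifforder_iff_semiconjBy.1 hPA).aeval p
    rw [mem_clifforder_iff_semiconjBy, SemiconjBy, ← this] at hPB
    exact hP.mul_left_cancel hPB.symm
  have : Invertible (2 : F) := invertibleOfNonzero two_ne_zero
  obtain ⟨q, hq, hqp⟩ := exists_odd_aeval_eq hp
  exact ⟨q, hq, hqp.symm⟩

end Clifforder

theorem clifforder_eq_iff_oddPolyEquiv_of_balanced {n : ℕ} {F : Type*} [Field F] [CharZero F]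
    (A B : Matrix (Fin n) (Fin n) F) (hA : IsBalanced A) (hB : IsBalanced B) :
    clifforder A = clifforder B ↔ OddPolyEquiv A B := by
  constructor
  · intro h
    obtain ⟨f, hf, hBf⟩ := exists_odd_aeval_eq_of_clifforder_eq hA h
    obtain ⟨g, hg, hAg⟩ := exists_odd_aeval_eq_of_clifforder_eq hB h.symm
    exact ⟨f, g, hf, hg, hBf, hAg⟩
  · rintro ⟨f, g, hf, hg, rfl, hAg⟩
    refine (clifforder_subset_clifforder_aeval hf).antisymm ?_
    conv_rhs => rw [hAg]
    exact clifforder_subset_clifforder_aeval hg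
end

section
/- Let q be a positive integer, let ω ∈ ℂ be a primitive q-th root of unity, and let A, B ∈ Mₙ(ℂ) satisfy AB = ω·BA. Then for all complex numbers s and t, (sA + tB)^q = s^q A^q + t^q B^q. -/
/-!
If `A * B = ω • (B * A)`, moving every `B` to the left of every `A` in the expansion of
`(A + B) ^ m` gives the q-binomial theorem `(A + B) ^ m = ∑ [m choose i]_ω • B ^ i * A ^ (m - i)`,
with Gaussian binomials defined by a Pascal rule. From
`[a + b choose a]_ω · [a]_ω! · [b]_ω! = [a + b]_ω!` and the fact that, for a primitive `q`-th
root `ω`, the q-integers `[k]_ω = (ω ^ k - 1) / (ω - 1)` vanish at `k = q` but not for `0 < k < q`,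
all coefficients `[q choose k]_ω` with `0 < k < q` are zero.
-/

open Finset

section QAnalogues

variable {K : Type*} [CommSemiring K] (ω : K)

noncomputable def qInt (m : ℕ) : K := ∑ i ∈ range m, ω ^ i

noncomputable def qFactorial (m : ℕ) : K := ∏ j ∈ range m, qInt ω (j + 1)

/-- The Gaussian binomial coefficient `[n choose k]_ω`; of its two Pascal rules, this one is
the rule produced by moving `B` to the left of `A` when `A * B = ω • (B * A)`. -/
noncomputable def qChoose : ℕ → ℕ → K
  | _, 0 => 1
  | 0, _ + 1 => 0
  | n + 1, k + 1 => qChoose n k + ω ^ (k + 1) * qChoose n (k + 1)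

@[simp]
theorem qChoose_zero_right (n : ℕ) : qChoose ω n 0 = 1 := by
  cases n <;> rfl

theorem qChoose_succ_succ (n k : ℕ) :
    qChoose ω (n + 1) (k + 1) = qChoose ω n k + ω ^ (k + 1) * qChoose ω n (k + 1) :=
  rfl

theorem qChoose_eq_zero_of_lt {n k : ℕ} (h : n < k) : qChoose ω n k = 0 := by
  induction n generalizing k with
  | zero => obtain ⟨k, rfl⟩ := Nat.exists_eq_succ_of_ne_zero h.ne'; rfl
  | succ n ih =>
    obtain ⟨k, rfl⟩ := Nat.exists_eq_succ_of_ne_zero (Nat.ne_zero_of_lt h)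
    rw [qChoose_succ_succ, ih (by omega), ih (by omega), mul_zero, add_zero]

@[simp]
theorem qChoose_self (n : ℕ) : qChoose ω n n = 1 := by
  induction n with
  | zero => rfl
  | succ n ih => rw [qChoose_succ_succ, ih, qChoose_eq_zero_of_lt ω n.lt_succ_self, mul_zero,
      add_zero]

theorem qInt_add (a b : ℕ) : qInt ω (a + b) = qInt ω a + ω ^ a * qInt ω b := by
  simp only [qInt, sum_range_add, pow_add, mul_sum]

theorem qFactorial_succ (m : ℕ) : qFactorial ω (m + 1) = qFactorial ω m * qInt ω (m + 1) :=
  prod_range_succ _ m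

theorem qChoose_add_mul_qFactorial_mul_qFactorial (a b : ℕ) :
    qChoose ω (a + b) a * (qFactorial ω a * qFactorial ω b) = qFactorial ω (a + b) := by
  induction a generalizing b with
  | zero => simp [qFactorial]
  | succ a iha =>
    induction b with
    | zero => simp [qFactorial]
    | succ b ihb =>
      have hb := iha (b + 1)
      rw [show a + (b + 1) = a + b + 1 by omega, qFactorial_succ ω b] at hb
      rw [show a + 1 + b = a + b + 1 by omega, qFactorial_succ ω a] at ihb
      have hInt : qInt ω (a + b + 1 + 1) = qInt ω (a + 1) + ω ^ (a + 1) * qInt ω (b + 1) := by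
        rw [← qInt_add]; congr 1; omega
      rw [show a + 1 + (b + 1) = a + b + 1 + 1 by omega, qChoose_succ_succ,
        qFactorial_succ ω (a + b + 1), qFactorial_succ ω a, qFactorial_succ ω b, hInt]
      calc _ = qInt ω (a + 1) * (qChoose ω (a + b + 1) a *
              (qFactorial ω a * (qFactorial ω b * qInt ω (b + 1)))) +
            ω ^ (a + 1) * qInt ω (b + 1) * (qChoose ω (a + b + 1) (a + 1) *
              (qFactorial ω a * qInt ω (a + 1) * qFactorial ω b)) := by ring
        _ = _ := by rw [hb, ihb]; ring

end QAnalogues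

namespace IsPrimitiveRoot

variable {K : Type*} [CommRing K] {ω : K} {q : ℕ} (hω : IsPrimitiveRoot ω q)
include hω

theorem qInt_ne_zero {k : ℕ} (hk0 : k ≠ 0) (hkq : k < q) : qInt ω k ≠ 0 := by
  intro h
  apply hω.pow_ne_one_of_pos_of_lt hk0 hkq
  rw [← sub_eq_zero, ← geom_sum_mul, ← qInt, h, zero_mul]

theorem qFactorial_ne_zero [IsDomain K] {k : ℕ} (hkq : k < q) : qFactorial ω k ≠ 0 :=
  prod_ne_zero_iff.mpr fun j hj => hω.qInt_ne_zero j.succ_ne_zero (by simp at hj; omega)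

theorem qFactorial_eq_zero [IsDomain K] (hq : 1 < q) : qFactorial ω q = 0 := by
  obtain ⟨p, rfl⟩ := Nat.exists_eq_succ_of_ne_zero (by omega : q ≠ 0)
  rw [qFactorial_succ, qInt, hω.geom_sum_eq_zero hq, mul_zero]

theorem qChoose_eq_zero [IsDomain K] {k : ℕ} (hk0 : k ≠ 0) (hkq : k < q) :
    qChoose ω q k = 0 := by
  have h := qChoose_add_mul_qFactorial_mul_qFactorial ω k (q - k)
  rw [Nat.add_sub_cancel' hkq.le, hω.qFactorial_eq_zero (by omega)] at h
  exact (mul_eq_zero.mp h).resolve_right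
    (mul_ne_zero (hω.qFactorial_ne_zero hkq) (hω.qFactorial_ne_zero (by omega)))

end IsPrimitiveRoot

section QCommuting

variable {K R : Type*} [CommSemiring K] [Semiring R] [Algebra K R] {ω : K} {A B : R}

theorem mul_pow_of_mul_eq_smul_mul (h : A * B = ω • (B * A)) (k : ℕ) :
    A * B ^ k = ω ^ k • (B ^ k * A) := by
  induction k with
  | zero => simp
  | succ k ih =>
    rw [pow_succ, ← mul_assoc, ih, smul_mul_assoc, mul_assoc, h, mul_smul_comm, smul_smul,
      ← mul_assoc, ← pow_succ, ← pow_succ]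

theorem add_pow_of_mul_eq_smul_mul (h : A * B = ω • (B * A)) (m : ℕ) :
    (A + B) ^ m = ∑ p ∈ antidiagonal m, qChoose ω m p.1 • (B ^ p.1 * A ^ p.2) := by
  induction m with
  | zero => simp
  | succ m ih =>
    set g : ℕ × ℕ → R := fun p => (ω ^ p.1 * qChoose ω m p.1) • (B ^ p.1 * A ^ p.2)
    have hA : A * (A + B) ^ m = ∑ p ∈ antidiagonal (m + 1), g p := by
      rw [Nat.sum_antidiagonal_succ', ih, mul_sum]
      simp only [g, qChoose_eq_zero_of_lt ω m.lt_succ_self, mul_zero, zero_smul, zero_add]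
      refine sum_congr rfl fun p _ => ?_
      rw [mul_smul_comm, ← mul_assoc, mul_pow_of_mul_eq_smul_mul h, smul_mul_assoc, smul_smul,
        mul_assoc, ← pow_succ', mul_comm]
    have hB : B * (A + B) ^ m =
        ∑ p ∈ antidiagonal m, qChoose ω m p.1 • (B ^ (p.1 + 1) * A ^ p.2) := by
      rw [ih, mul_sum]
      simp only [mul_smul_comm, ← mul_assoc, ← pow_succ']
    rw [pow_succ', add_mul, hA, hB, Nat.sum_antidiagonal_succ, Nat.sum_antidiagonal_succ]
    simp only [g, qChoose_succ_succ, qChoose_zero_right, add_smul, sum_add_distrib, pow_zero,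
      mul_one, one_mul, one_smul]
    abel

end QCommuting

theorem IsPrimitiveRoot.add_pow_of_mul_eq_smul_mul {K R : Type*} [CommRing K] [IsDomain K]
    [Semiring R] [Algebra K R] {ω : K} {q : ℕ} (hω : IsPrimitiveRoot ω q) (hq : 0 < q)
    {A B : R} (h : A * B = ω • (B * A)) : (A + B) ^ q = A ^ q + B ^ q := by
  rw [_root_.add_pow_of_mul_eq_smul_mul h, sum_eq_add_of_mem (0, q) (q, 0) (by simp) (by simp)
    (by simp [hq.ne'])]
  · simp
  · rintro ⟨i, j⟩ hij hne
    rw [HasAntidiagonal.mem_antidiagonal] at hij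
    rw [hω.qChoose_eq_zero (by grind) (by grind), zero_smul]

theorem potter_scaled {n q : ℕ} (hq : 0 < q) (ω : ℂ)
    (hω : ω ^ q = 1) (hω' : ∀ k : ℕ, 1 ≤ k → k < q → ω ^ k ≠ 1)
    (A B : Matrix (Fin n) (Fin n) ℂ) (h : A * B = ω • (B * A)) :
    ∀ s t : ℂ, (s • A + t • B) ^ q = s ^ q • A ^ q + t ^ q • B ^ q := by
  intro s t
  have hst : (s • A) * (t • B) = ω • ((t • B) * (s • A)) := by
    rw [smul_mul_smul_comm, smul_mul_smul_comm, h, smul_comm, mul_comm]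
  have hprim : IsPrimitiveRoot ω q := IsPrimitiveRoot.mk_of_lt ω hq hω hω'
  rw [hprim.add_pow_of_mul_eq_smul_mul hq hst, smul_pow, smul_pow]
end

section
/- Let F be a field of characteristic zero, let k ≥ 2 be an integer, and let A ∈ Mₙ(F) be nilpotent. If B ∈ Mₙ(F) satisfies Ker Ad_A^k = Ann_k(B), then B is a scalar matrix. -/
/-!
An idempotent `P` lies in `Ann_k(B)` only if it commutes with `B`, because `Ad_P³ = Ad_P`. So it
suffices to find `v, w` with `v ⬝ w = 1` such that every idempotent `u vᵀ` (`v ⬝ u = 1`) lies in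
`Ker Ad_A^k = Ann_k(B)`: then `B u = (v ⬝ B w) u` on the affine hyperplane `v ⬝ u = 1`, which
spans, so `B` is scalar.

For `k ≥ 3` every square-zero `X` has `Ad_X³ = 0`, so `Ker Ad_A^k` contains `1` and all
square-zero matrices, which span `Mₙ(F)` in characteristic zero. For `k = 2` a square-zero
`X = u vᵀ` lies in `Ann_2(B)` whenever `v ⊥ u, B u`; evaluating `Ad_A²(X)` at `u` then puts `A u`
and `A² u` into `span {u, B u}`, impossible when `A² u ≠ 0 = A³ u` since `u, A u, A² u` are then
independent. Hence `A² = 0`, so `Ad_A²(X) = -2 A X A` vanishes on every `X = u vᵀ` with `vᵀ A = 0`.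
-/

open Matrix

/-- The adjoint map `Ad_A : X ↦ AX - XA`. -/
def adFun {n : ℕ} {F : Type*} [Field F] (A : Matrix (Fin n) (Fin n) F) :
    Matrix (Fin n) (Fin n) F → Matrix (Fin n) (Fin n) F :=
  fun X => A * X - X * A

/-- The kernel of the `k`-fold composition of `Ad_A`. -/
def kerAdPow {n : ℕ} {F : Type*} [Field F] (A : Matrix (Fin n) (Fin n) F) (k : ℕ) :
    Set (Matrix (Fin n) (Fin n) F) :=
  {X | (adFun A)^[k] X = 0}

/-- The `k`-th annihilator of `B`: all `X` with `Ad_X^k (B) = 0`. -/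
def annPow {n : ℕ} {F : Type*} [Field F] (B : Matrix (Fin n) (Fin n) F) (k : ℕ) :
    Set (Matrix (Fin n) (Fin n) F) :=
  {X | (adFun X)^[k] B = 0}

section Algebra

open LinearMap

variable {R A : Type*} [CommRing R] [Ring A] [Algebra R A]

theorem mulLeft_sub_mulRight_pow_eq_zero_of_mul_self_eq_zero {X : A} (hX : X * X = 0) {k : ℕ}
    (hk : 3 ≤ k) : (mulLeft R X - mulRight R X) ^ k = 0 := by
  have hX2 : X ^ 2 = 0 := by rw [sq, hX]
  rw [sub_eq_add_neg]
  exact (commute_mulLeft_right (R := R) X X).neg_right.add_pow_eq_zero_of_add_le_succ_of_pow_eq_zero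
    (m := 2) (n := 2) (by rw [pow_mulLeft, hX2, mulLeft_zero_eq_zero])
    (by rw [neg_sq, pow_mulRight, hX2, mulRight_zero_eq_zero]) (by omega)

theorem IsIdempotentElem.mulLeft_sub_mulRight_pow_three {P : A} (hP : IsIdempotentElem P) :
    (mulLeft R P - mulRight R P) ^ 3 = mulLeft R P - mulRight R P := by
  ext1 X
  have hP' : ∀ Y, P * (P * Y) = P * Y := fun Y => by rw [← mul_assoc, hP.eq]
  rw [pow_succ, pow_succ, pow_one, Module.End.mul_apply, Module.End.mul_apply]
  simp only [LinearMap.sub_apply, mulLeft_apply, mulRight_apply, mul_sub, sub_mul, mul_assoc,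
    hP.eq, hP']
  abel

end Algebra

section Matrices

variable {F : Type*} [Field F] {ι : Type*} [Fintype ι] [DecidableEq ι]

theorem Matrix.single_sub_single_mem_span_mul_self_eq_zero (i j : ι) :
    single i i (1 : F) - single j j 1 ∈ Submodule.span F {X : Matrix ι ι F | X * X = 0} := by
  obtain rfl | hij := eq_or_ne i j
  · simp
  have hsq : ∀ X : Matrix ι ι F, X * X = 0 → X ∈ Submodule.span F {X | X * X = 0} :=
    fun X hX => Submodule.subset_span hX
  set N : Matrix ι ι F := single i i 1 - single i j 1 + single j i 1 - single j j 1
  have hN : N * N = 0 := by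
    simp only [N, mul_sub, mul_add, sub_mul, add_mul, single_mul_single_same, mul_one,
      single_mul_single_of_ne, ne_eq, hij, hij.symm, not_false_eq_true, sub_zero, zero_sub,
      add_zero]
    abel
  have hdiff : single i i (1 : F) - single j j 1 = N + single i j 1 - single j i 1 := by
    simp only [N]
    abel
  rw [hdiff]
  refine Submodule.sub_mem _ (Submodule.add_mem _ (hsq _ hN) (hsq _ ?_)) (hsq _ ?_) <;>
    simp [single_mul_single_of_ne, hij, hij.symm]

theorem Matrix.span_insert_one_mul_self_eq_zero_eq_top [CharZero F] :
    Submodule.span F (insert 1 {X : Matrix ι ι F | X * X = 0}) = ⊤ := by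
  set S := Submodule.span F (insert 1 {X : Matrix ι ι F | X * X = 0})
  have hsq : ∀ X : Matrix ι ι F, X * X = 0 → X ∈ S :=
    fun X hX => Submodule.subset_span (Set.mem_insert_of_mem _ hX)
  have hdiag : ∀ i : ι, single i i (1 : F) ∈ S := by
    intro i
    have hcard : (Fintype.card ι : F) ≠ 0 := Nat.cast_ne_zero.2 (Fintype.card_pos_iff.2 ⟨i⟩).ne'
    have hsum : (Fintype.card ι : F) • single i i (1 : F) =
        1 + ∑ j, (single i i 1 - single j j 1) := by
      rw [Finset.sum_sub_distrib, sum_single_one, Finset.sum_const, Finset.card_univ,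
        Nat.cast_smul_eq_nsmul]
      abel
    rw [← inv_smul_smul₀ hcard (single i i 1), hsum]
    refine Submodule.smul_mem _ _ (Submodule.add_mem _ (Submodule.subset_span (by simp))
      (Submodule.sum_mem _ fun j _ => ?_))
    exact Submodule.span_mono (Set.subset_insert _ _)
      (single_sub_single_mem_span_mul_self_eq_zero i j)
  refine eq_top_iff.2 fun X _ => ?_
  rw [matrix_eq_sum_single X]
  refine Submodule.sum_mem _ fun i _ => Submodule.sum_mem _ fun j _ => ?_
  rw [← mul_one (X i j), ← smul_eq_mul, ← smul_single]
  refine Submodule.smul_mem _ _ ?_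
  obtain rfl | hij := eq_or_ne i j
  · exact hdiag i
  · exact hsq _ (single_mul_single_of_ne (h := hij.symm) ..)

theorem Matrix.mem_span_of_forall_dotProduct_eq_zero {s : Set (ι → F)} {x : ι → F}
    (h : ∀ v : ι → F, (∀ y ∈ s, v ⬝ᵥ y = 0) → v ⬝ᵥ x = 0) : x ∈ Submodule.span F s := by
  rw [← Subspace.forall_mem_dualAnnihilator_apply_eq_zero_iff]
  intro φ hφ
  obtain ⟨v, rfl⟩ := (dotProductEquiv F ι).surjective φ
  exact h v fun y hy => (Submodule.mem_dualAnnihilator _).1 hφ y (Submodule.subset_span hy)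

theorem Matrix.det_eq_zero_of_isNilpotent [Nonempty ι] {A : Matrix ι ι F} (hA : IsNilpotent A) :
    A.det = 0 := by
  obtain ⟨N, hN⟩ := hA
  exact eq_zero_of_pow_eq_zero (n := N) (by rw [← det_pow, hN, det_zero])

theorem Matrix.exists_pow_mulVec_ne_zero_and_eq_zero {A : Matrix ι ι F} (hA : IsNilpotent A)
    {m : ℕ} (hm : A ^ m ≠ 0) : ∃ u, A ^ m *ᵥ u ≠ 0 ∧ A ^ (m + 1) *ᵥ u = 0 := by
  have : Nontrivial (Matrix ι ι F) := nontrivial_of_ne _ _ hm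
  have hmp : m < nilpotencyClass A := by
    by_contra! hpm
    exact hm (pow_eq_zero_of_le hpm (pow_nilpotencyClass hA))
  obtain ⟨w, hw⟩ : ∃ w, A ^ (nilpotencyClass A - 1) *ᵥ w ≠ 0 := by
    by_contra! h
    exact pow_pred_nilpotencyClass hA (ext_iff_mulVec.2 fun w => by rw [h, zero_mulVec])
  refine ⟨A ^ (nilpotencyClass A - 1 - m) *ᵥ w, ?_, ?_⟩
  · rwa [mulVec_mulVec, ← pow_add, Nat.add_sub_of_le (by omega)]
  · rw [mulVec_mulVec, ← pow_add, show m + 1 + (nilpotencyClass A - 1 - m) = nilpotencyClass A by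
      omega, pow_nilpotencyClass hA, zero_mulVec]

theorem Matrix.linearIndependent_mulVec_pow {A : Matrix ι ι F} {u : ι → F}
    (h2 : A ^ 2 *ᵥ u ≠ 0) (h3 : A ^ 3 *ᵥ u = 0) :
    LinearIndependent F ![u, A *ᵥ u, A ^ 2 *ᵥ u] := by
  have h4 : A ^ 4 *ᵥ u = 0 := by rw [pow_succ', ← mulVec_mulVec, h3, mulVec_zero]
  rw [Fintype.linearIndependent_iff]
  intro g hg
  simp only [Fin.sum_univ_three, Matrix.cons_val_zero, Matrix.cons_val_one,
    Matrix.cons_val_two, Matrix.head_cons, Matrix.tail_cons] at hg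
  have hApow : ∀ j,
      g 0 • A ^ j *ᵥ u + g 1 • A ^ (j + 1) *ᵥ u + g 2 • A ^ (j + 2) *ᵥ u = 0 := by
    intro j
    rw [← mulVec_zero (A ^ j), ← hg]
    simp only [mulVec_add, mulVec_smul, mulVec_mulVec, ← pow_succ, ← pow_add]
  have h0 : g 0 = 0 := by
    have := hApow 2
    simp only [h3, h4, smul_zero, add_zero] at this
    exact (smul_eq_zero.1 this).resolve_right h2
  have h1 : g 1 = 0 := by
    have := hApow 1
    simp only [h3, h0, zero_smul, smul_zero, zero_add, add_zero] at this
    exact (smul_eq_zero.1 this).resolve_right h2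
  have h2' : g 2 = 0 := by
    simp only [h0, h1, zero_smul, zero_add] at hg
    exact (smul_eq_zero.1 hg).resolve_right h2
  intro i
  fin_cases i <;> assumption

end Matrices

section AdjointMap

open LinearMap

variable {F : Type*} [Field F] {n : ℕ}

theorem iterate_adFun (A : Matrix (Fin n) (Fin n) F) (k : ℕ) :
    (adFun A)^[k] = ⇑((mulLeft F A - mulRight F A) ^ k) := by
  rw [Module.End.coe_pow]
  rfl

theorem kerAdPow_eq_ker (A : Matrix (Fin n) (Fin n) F) (k : ℕ) :
    kerAdPow A k = ker ((mulLeft F A - mulRight F A) ^ k) := by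
  ext X
  simp [kerAdPow, iterate_adFun]

theorem iterate_adFun_one (A : Matrix (Fin n) (Fin n) F) {k : ℕ} (hk : k ≠ 0) :
    (adFun A)^[k] 1 = 0 := by
  obtain ⟨k, rfl⟩ := Nat.exists_eq_succ_of_ne_zero hk
  rw [Function.iterate_succ_apply, show adFun A 1 = 0 by simp [adFun],
    Function.iterate_fixed (by simp [adFun])]

theorem iterate_two_adFun (X B : Matrix (Fin n) (Fin n) F) :
    (adFun X)^[2] B = X * X * B - 2 * (X * B * X) + B * X * X := by
  simp only [Function.iterate_succ_apply', Function.iterate_zero_apply, adFun]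
  noncomm_ring

theorem commute_of_iterate_adFun_eq_zero {P B : Matrix (Fin n) (Fin n) F}
    (hP : IsIdempotentElem P) {k : ℕ} (h : (adFun P)^[k] B = 0) : Commute P B := by
  set D := mulLeft F P - mulRight F P
  have hodd : ∀ m, D ^ (2 * m + 1) = D := by
    intro m
    induction m with
    | zero => simp
    | succ m ih => rw [show 2 * (m + 1) + 1 = 2 * m + 1 + 2 by ring, pow_add, ih, ← pow_succ',
        hP.mulLeft_sub_mulRight_pow_three]
  rw [iterate_adFun] at h
  have hD : D B = 0 := by
    rw [← hodd k, show 2 * k + 1 = (k + 1) + k by omega, pow_add, Module.End.mul_apply, h,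
      map_zero]
  rwa [LinearMap.sub_apply, mulLeft_apply, mulRight_apply, sub_eq_zero] at hD

theorem exists_eq_smul_one_of_forall_vecMulVec_mem_annPow {B : Matrix (Fin n) (Fin n) F} {k : ℕ}
    {v w : Fin n → F} (hvw : v ⬝ᵥ w = 1)
    (h : ∀ u, v ⬝ᵥ u = 1 → vecMulVec u v ∈ annPow B k) :
    ∃ c : F, B = c • (1 : Matrix (Fin n) (Fin n) F) := by
  set c := v ⬝ᵥ B *ᵥ w
  have heig : ∀ u, v ⬝ᵥ u = 1 → B *ᵥ u = c • u := by
    intro u hu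
    have hP : IsIdempotentElem (vecMulVec u v) := by
      rw [IsIdempotentElem, vecMulVec_mul_vecMulVec, hu, one_smul]
    have hPBw := congrArg (· *ᵥ w) (commute_of_iterate_adFun_eq_zero hP (h u hu)).eq
    simpa [← mulVec_mulVec, vecMulVec_mulVec, hvw, c] using hPBw.symm
  refine ⟨c, ext_iff_mulVec.2 fun x => ?_⟩
  have hu : v ⬝ᵥ (x + (1 - v ⬝ᵥ x) • w) = 1 := by
    rw [dotProduct_add, dotProduct_smul, hvw, smul_eq_mul, mul_one, add_sub_cancel]
  have hx : x = (x + (1 - v ⬝ᵥ x) • w) - (1 - v ⬝ᵥ x) • w := by abel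
  rw [hx, mulVec_sub, mulVec_smul, heig _ hu, heig _ hvw, smul_mulVec, one_mulVec, smul_sub,
    smul_comm]

theorem mem_annPow_of_mul_self_eq_zero {X : Matrix (Fin n) (Fin n) F} (hX : X * X = 0)
    (B : Matrix (Fin n) (Fin n) F) {k : ℕ} (hk : 3 ≤ k) : X ∈ annPow B k := by
  show (adFun X)^[k] B = 0
  rw [iterate_adFun, mulLeft_sub_mulRight_pow_eq_zero_of_mul_self_eq_zero hX hk,
    LinearMap.zero_apply]

theorem kerAdPow_eq_univ_of_eq_annPow [CharZero F] {A B : Matrix (Fin n) (Fin n) F} {k : ℕ}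
    (hk : 3 ≤ k) (h : kerAdPow A k = annPow B k) : kerAdPow A k = Set.univ := by
  rw [kerAdPow_eq_ker, Submodule.coe_eq_univ, eq_top_iff,
    ← span_insert_one_mul_self_eq_zero_eq_top, Submodule.span_le, ← kerAdPow_eq_ker]
  rintro X (rfl | hX)
  · exact iterate_adFun_one A (by omega)
  · exact h ▸ mem_annPow_of_mul_self_eq_zero hX B hk

theorem vecMulVec_mem_annPow_two {B : Matrix (Fin n) (Fin n) F} {u v : Fin n → F}
    (hvu : v ⬝ᵥ u = 0) (hvBu : v ⬝ᵥ B *ᵥ u = 0) : vecMulVec u v ∈ annPow B 2 := by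
  have hXX : vecMulVec u v * vecMulVec u v = 0 := by
    rw [vecMulVec_mul_vecMulVec, hvu, zero_smul, vecMulVec_zero]
  have hXBX : vecMulVec u v * B * vecMulVec u v = 0 := by
    rw [vecMulVec_mul, vecMulVec_mul_vecMulVec, ← dotProduct_mulVec, hvBu, zero_smul,
      vecMulVec_zero]
  show (adFun _)^[2] B = 0
  rw [iterate_two_adFun, hXX, hXBX, mul_assoc, hXX]
  simp

theorem iterate_two_adFun_vecMulVec_mulVec (A : Matrix (Fin n) (Fin n) F) {u v : Fin n → F}
    (hvu : v ⬝ᵥ u = 0) :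
    (adFun A)^[2] (vecMulVec u v) *ᵥ u = (v ⬝ᵥ A ^ 2 *ᵥ u) • u - (2 * v ⬝ᵥ A *ᵥ u) • A *ᵥ u := by
  simp only [iterate_two_adFun, add_mulVec, sub_mulVec, ← mulVec_mulVec, vecMulVec_mulVec, hvu]
  simp only [MulOpposite.op_zero, zero_smul, mulVec_zero, op_smul_eq_smul, mulVec_smul,
    ofNat_mulVec, zero_sub, mulVec_mulVec, sq, mul_smul]
  abel

theorem sq_eq_zero_of_kerAdPow_two_eq_annPow [CharZero F] {A B : Matrix (Fin n) (Fin n) F}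
    (hA : IsNilpotent A) (h : kerAdPow A 2 = annPow B 2) : A ^ 2 = 0 := by
  by_contra hA2
  obtain ⟨u, h2u, h3u⟩ := exists_pow_mulVec_ne_zero_and_eq_zero hA hA2
  have hind := linearIndependent_mulVec_pow h2u h3u
  have hperp : ∀ v, v ⬝ᵥ u = 0 → v ⬝ᵥ B *ᵥ u = 0 →
      v ⬝ᵥ A *ᵥ u = 0 ∧ v ⬝ᵥ A ^ 2 *ᵥ u = 0 := by
    intro v hvu hvBu
    have hX : vecMulVec u v ∈ kerAdPow A 2 := h ▸ vecMulVec_mem_annPow_two hvu hvBu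
    have hXu := congrArg (· *ᵥ u) (show (adFun A)^[2] (vecMulVec u v) = 0 from hX)
    simp only [iterate_two_adFun_vecMulVec_mulVec A hvu, zero_mulVec] at hXu
    have hc := Fintype.linearIndependent_iff.1 hind ![v ⬝ᵥ A ^ 2 *ᵥ u, -(2 * v ⬝ᵥ A *ᵥ u), 0]
      (by simpa [Fin.sum_univ_three, neg_smul, ← sub_eq_add_neg] using hXu)
    exact ⟨by simpa using hc 1, by simpa using hc 0⟩
  have hspan : Submodule.span F (Set.range ![u, A *ᵥ u, A ^ 2 *ᵥ u]) ≤
      Submodule.span F (Set.range ![u, B *ᵥ u]) := by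
    rw [Submodule.span_le]
    rintro _ ⟨i, rfl⟩
    fin_cases i
    · exact Submodule.subset_span ⟨0, rfl⟩
    · exact mem_span_of_forall_dotProduct_eq_zero fun v hv =>
        (hperp v (hv _ ⟨0, rfl⟩) (hv _ ⟨1, rfl⟩)).1
    · exact mem_span_of_forall_dotProduct_eq_zero fun v hv =>
        (hperp v (hv _ ⟨0, rfl⟩) (hv _ ⟨1, rfl⟩)).2
  have hrank := (Submodule.finrank_mono hspan).trans (finrank_range_le_card _)
  rw [finrank_span_eq_card hind] at hrank
  simp at hrank

theorem vecMulVec_mem_kerAdPow_two {A : Matrix (Fin n) (Fin n) F} (hA : A ^ 2 = 0)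
    {v : Fin n → F} (hvA : v ᵥ* A = 0) (u : Fin n → F) : vecMulVec u v ∈ kerAdPow A 2 := by
  have hXA : vecMulVec u v * A = 0 := by rw [vecMulVec_mul, hvA, vecMulVec_zero]
  show (adFun A)^[2] _ = 0
  rw [iterate_two_adFun, ← sq, hA, mul_assoc A, hXA]
  simp

end AdjointMap

theorem isScalar_of_kerAdPow_eq_annPow_of_nilpotent {n : ℕ} {F : Type*} [Field F] [CharZero F]
    (k : ℕ) (hk : 2 ≤ k) (A B : Matrix (Fin n) (Fin n) F) (hA : IsNilpotent A)
    (h : kerAdPow A k = annPow B k) :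
    ∃ c : F, B = c • (1 : Matrix (Fin n) (Fin n) F) := by
  rcases isEmpty_or_nonempty (Fin n) with _ | hn
  · exact ⟨0, Subsingleton.elim _ _⟩
  suffices ∃ v w : Fin n → F, v ⬝ᵥ w = 1 ∧
      ∀ u, v ⬝ᵥ u = 1 → vecMulVec u v ∈ kerAdPow A k by
    obtain ⟨v, w, hvw, hv⟩ := this
    exact exists_eq_smul_one_of_forall_vecMulVec_mem_annPow hvw fun u hu => h ▸ hv u hu
  rcases hk.eq_or_lt with rfl | hk3
  · obtain ⟨v, hv0, hvA⟩ := exists_vecMul_eq_zero_iff.2 (det_eq_zero_of_isNilpotent hA)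
    obtain ⟨j, hj⟩ := Function.ne_iff.1 hv0
    refine ⟨v, Pi.single j (v j)⁻¹, by rw [dotProduct_single, mul_inv_cancel₀ hj], fun u _ => ?_⟩
    exact vecMulVec_mem_kerAdPow_two (sq_eq_zero_of_kerAdPow_two_eq_annPow hA h) hvA u
  · refine ⟨Pi.single hn.some 1, Pi.single hn.some 1, by simp, fun u _ => ?_⟩
    rw [kerAdPow_eq_univ_of_eq_annPow hk3 h]
    trivial
end

section
/- Let F be a field of characteristic zero and let B ∈ Mₙ(F). Then B is polynomially equivalent to Jₙ(0) if and only if there exist a₀, a₁, …, a_{n−1} ∈ F with a₁ ≠ 0 such that B = a₀Iₙ + a₁Jₙ(0) + a₂Jₙ(0)² + ⋯ + a_{n−1}Jₙ(0)^{n−1}. -/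
/-- The `n × n` nilpotent Jordan block: ones on the superdiagonal, zeros elsewhere. -/
def jordanBlock (n : ℕ) (F : Type*) [Field F] : Matrix (Fin n) (Fin n) F :=
  Matrix.of fun i j => if (i : ℕ) + 1 = (j : ℕ) then 1 else 0

/-- `A` and `B` are polynomially equivalent: each is a polynomial in the other. -/
def PolyEquiv {n : ℕ} {F : Type*} [Field F] (A B : Matrix (Fin n) (Fin n) F) : Prop :=
  ∃ f g : Polynomial F, B = Polynomial.aeval A f ∧ A = Polynomial.aeval B g

/-!
Evaluation at `J = jordanBlock n F` identifies `F[X] ⧸ (X ^ n)` with `F[J]`: the entry `(0, k)` of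
`p(J)` is the `k`-th coefficient of `p`, and `J ^ n = 0`. Hence `J` is a polynomial `g` in
`B = f(J)` exactly when `X ^ n ∣ g ∘ f - X`. For `n ≥ 2` this forces `f'(0) ≠ 0` by the chain
rule; conversely, if `f'(0) ≠ 0` then `f` has a compositional inverse modulo every power of `X`,
built one coefficient at a time.
-/

open Polynomial

section JordanBlock

variable {n : ℕ} {F : Type*} [Field F]

lemma jordanBlock_pow_apply (k : ℕ) (i j : Fin n) :
    (jordanBlock n F ^ k) i j = if (i : ℕ) + k = j then 1 else 0 := by
  induction k generalizing j with
  | zero => simp [Matrix.one_apply, Fin.val_inj]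
  | succ k ih =>
    rw [pow_succ, Matrix.mul_apply]
    by_cases h : (i : ℕ) + k < n
    · have hrow : ∀ l : Fin n, (jordanBlock n F ^ k) i l = if l = ⟨i + k, h⟩ then 1 else 0 := by
        intro l
        simp [ih, Fin.ext_iff, eq_comm]
      simp only [hrow, ite_mul, one_mul, zero_mul, Finset.sum_ite_eq', Finset.mem_univ, if_true]
      simp [jordanBlock, ← add_assoc]
    · rw [if_neg (by omega)]
      refine Finset.sum_eq_zero fun l _ => ?_
      rw [ih, if_neg (by omega), zero_mul]

lemma jordanBlock_pow_eq_zero {k : ℕ} (hk : n ≤ k) : jordanBlock n F ^ k = 0 := by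
  ext i j
  simp [jordanBlock_pow_apply, show (i : ℕ) + k ≠ j by omega]

lemma aeval_jordanBlock_apply_zero (p : F[X]) {k : ℕ} (hk : k < n) :
    aeval (jordanBlock n F) p ⟨0, by omega⟩ ⟨k, hk⟩ = p.coeff k := by
  rw [aeval_eq_sum_range, Matrix.sum_apply]
  simp only [Matrix.smul_apply, jordanBlock_pow_apply, zero_add, smul_eq_mul, mul_ite, mul_one,
    mul_zero, Finset.sum_ite_eq', Finset.mem_range, ite_eq_left_iff, not_lt]
  exact fun hdeg => (coeff_eq_zero_of_natDegree_lt hdeg).symm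

lemma aeval_jordanBlock_eq_zero_iff {p : F[X]} :
    aeval (jordanBlock n F) p = 0 ↔ X ^ n ∣ p := by
  constructor
  · intro h
    refine X_pow_dvd_iff.2 fun k hk => ?_
    rw [← aeval_jordanBlock_apply_zero p hk, h, Matrix.zero_apply]
  · rintro ⟨q, rfl⟩
    rw [map_mul, map_pow, aeval_X, jordanBlock_pow_eq_zero le_rfl, zero_mul]

lemma aeval_jordanBlock_eq_iff {p q : F[X]} :
    aeval (jordanBlock n F) p = aeval (jordanBlock n F) q ↔ X ^ n ∣ p - q := by
  rw [← sub_eq_zero, ← map_sub, aeval_jordanBlock_eq_zero_iff]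

lemma aeval_jordanBlock_eq_sum (p : F[X]) :
    aeval (jordanBlock n F) p = ∑ i ∈ Finset.range n, p.coeff i • jordanBlock n F ^ i := by
  rw [aeval_eq_sum_range' ((Nat.lt_succ_self p.natDegree).trans_le (le_max_right n _))]
  refine (Finset.sum_subset (Finset.range_subset_range.2 (le_max_left _ _)) ?_).symm
  intro i _ hi
  rw [jordanBlock_pow_eq_zero (by simpa using hi), smul_zero]

end JordanBlock

section CompInverse

lemma coeff_one_comp {R : Type*} [CommRing R] (g f : R[X]) :
    (g.comp f).coeff 1 = (derivative g).eval (f.coeff 0) * f.coeff 1 := by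
  have h : ∀ p : R[X], p.coeff 1 = (derivative p).eval 0 := fun p => by
    simp [← coeff_zero_eq_eval_zero, coeff_derivative]
  rw [h, h, derivative_comp, eval_mul, eval_comp, ← coeff_zero_eq_eval_zero f, mul_comm]

lemma coeff_one_ne_zero_of_X_sq_dvd_comp_sub_X {R : Type*} [CommRing R] [Nontrivial R]
    {f g : R[X]} (h : X ^ 2 ∣ g.comp f - X) : f.coeff 1 ≠ 0 := by
  have hcoeff := X_pow_dvd_iff.1 h 1 one_lt_two
  rw [coeff_sub, coeff_one_comp, coeff_X_one, sub_eq_zero] at hcoeff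
  exact right_ne_zero_of_mul_eq_one hcoeff

lemma exists_X_pow_dvd_comp_sub_X {F : Type*} [Field F] {f : F[X]} (hf : f.coeff 1 ≠ 0) (m : ℕ) :
    ∃ g : F[X], X ^ m ∣ g.comp f - X := by
  induction m with
  | zero => exact ⟨0, one_dvd _⟩
  | succ m ih =>
    obtain ⟨g, r, hr⟩ := ih
    obtain ⟨q, hq⟩ := X_dvd_sub_C (p := f)
    have hq0 : q.coeff 0 = f.coeff 1 := by
      simpa [coeff_X_mul] using (congrArg (coeff · 1) hq).symm
    -- correcting `g` by a multiple of `(X - C (f 0)) ^ m` kills the coefficient of `X ^ m`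
    set c := r.coeff 0 / f.coeff 1 ^ m
    refine ⟨g - C c * (X - C (f.coeff 0)) ^ m, ?_⟩
    have hcomp : (g - C c * (X - C (f.coeff 0)) ^ m).comp f - X = X ^ m * (r - C c * q ^ m) := by
      simp only [sub_comp, mul_comp, pow_comp, C_comp, X_comp]
      rw [hq, mul_pow]
      linear_combination hr
    rw [hcomp, pow_succ]
    refine mul_dvd_mul_left _ (X_dvd_iff.2 ?_)
    have hqm : (q ^ m).coeff 0 = f.coeff 1 ^ m := hq0 ▸ map_pow constantCoeff q m
    rw [coeff_sub, coeff_C_mul, hqm, div_mul_cancel₀ _ (pow_ne_zero m hf), sub_self]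

end CompInverse

theorem polyEquiv_jordan_iff_general {n : ℕ} {F : Type*} [Field F]
    (B : Matrix (Fin n) (Fin n) F) :
    PolyEquiv (jordanBlock n F) B ↔
      ∃ a : ℕ → F, a 1 ≠ 0 ∧
        B = ∑ i ∈ Finset.range n, a i • (jordanBlock n F) ^ i := by
  constructor
  · rintro ⟨f, g, rfl, hg⟩
    have hdvd : X ^ n ∣ g.comp f - X := by
      rwa [← aeval_jordanBlock_eq_iff, aeval_comp, aeval_X, eq_comm]
    refine ⟨fun i => if i < n then f.coeff i else 1, ?_, ?_⟩
    · dsimp only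
      split_ifs with hn
      · exact coeff_one_ne_zero_of_X_sq_dvd_comp_sub_X ((pow_dvd_pow X hn).trans hdvd)
      · exact one_ne_zero
    · rw [aeval_jordanBlock_eq_sum]
      exact Finset.sum_congr rfl fun i hi => by simp [Finset.mem_range.1 hi]
  · rintro ⟨a, ha, rfl⟩
    -- summing up to `n + 2` keeps the coefficient `a 1` in `f` even when `n ≤ 1`
    set f : F[X] := ∑ i ∈ Finset.range (n + 2), C (a i) * X ^ i
    have hf : ∀ i < n + 2, f.coeff i = a i := fun i hi => by
      simp [f, finsetSum_coeff, hi]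
    obtain ⟨g, hg⟩ := exists_X_pow_dvd_comp_sub_X (f := f) (by rwa [hf 1 (by omega)]) n
    have hB : aeval (jordanBlock n F) f = ∑ i ∈ Finset.range n, a i • jordanBlock n F ^ i := by
      rw [aeval_jordanBlock_eq_sum]
      exact Finset.sum_congr rfl fun i hi => by rw [hf i (by simp at hi; omega)]
    refine ⟨f, g, hB.symm, ?_⟩
    rw [← hB, ← aeval_comp, aeval_jordanBlock_eq_iff.2 hg, aeval_X]

theorem polyEquiv_jordan_iff {n : ℕ} {F : Type*} [Field F] [CharZero F]
    (B : Matrix (Fin n) (Fin n) F) :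
    PolyEquiv (jordanBlock n F) B ↔
      ∃ a : ℕ → F, a 1 ≠ 0 ∧
        B = ∑ i ∈ Finset.range n, a i • (jordanBlock n F) ^ i :=
  polyEquiv_jordan_iff_general B
end
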